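/- Let `t` be a valid Patricia trie in which every leaf label has length `ℓ`, and `v_i : List Bool` with `|v_i| = ℓ`. Let `π` be a position with `subtreeAt t π = some g`, where `g = node s g₀ g₁`, and suppose for some bit `b` that `g_b = node s' d₀ d₁`, where for some bit `b'` the child `d_{b'}` equals `leaf v_d`. Write `ns` for the other child of `g_b` and `ps` for the other child of `g`. Assume `s` is not a prefix of `v_i`, and that whenever `π = π₀ ++ [i]` is nonempty with `subtreeAt t π₀ = some (node s₀ l₀ r₀)`, the string `s₀ ++ [i]` is a prefix of `v_i`. Then: neither of `lbl ns`, `lbl ps` is a prefix of the other; the longest common prefix of `lbl ns` and `lbl ps` equals `s`; the trie `replaceAt t π (join (join ns ps) (leaf v_i))` is valid; and its set of leaf labels equals `(leafLabels t \ {v_d}) ∪ {v_i}`. (Special case 4 of the paper's replace operation: Case 6 of Invariant 1 and Case 3 of Lemma `successful-special-mov-lem`.) -/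

import Mathlib

inductive PTrie : Type
  | leaf (s : List Bool) : PTrie
  | node (s : List Bool) (l r : PTrie) : PTrie

/-- Label at the root of a trie. -/
def lbl : PTrie → List Bool
  | .leaf s => s
  | .node s _ _ => s

/-- A trie is valid if for every internal node `node s l r`,
`s ++ [false]` is a prefix of `lbl l` and `s ++ [true]` is a prefix of `lbl r`. -/
def Valid : PTrie → Prop
  | .leaf _ => True
  | .node s l r => ((s ++ [false]) <+: lbl l) ∧ ((s ++ [true]) <+: lbl r) ∧ Valid l ∧ Valid r

/-- Subtree at a position: descend left on `false`, right on `true`. -/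
def subtreeAt : PTrie → List Bool → Option PTrie
  | t, [] => some t
  | .leaf _, _ :: _ => none
  | .node _ l r, b :: π => subtreeAt (if b then r else l) π

/-- Set of binary strings appearing at the leaves. -/
def leafLabels : PTrie → Set (List Bool)
  | .leaf s => {s}
  | .node _ l r => leafLabels l ∪ leafLabels r

/-- Sequential search. -/
def search (v : List Bool) : PTrie → PTrie
  | .leaf s => .leaf s
  | .node s l r =>
    if s <+: v ∧ s ≠ v then
      (if v.getD s.length false then search v r else search v l)
    else .node s l r

/-- Position of the node returned by `search`. -/
def searchPos (v : List Bool) : PTrie → List Bool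
  | .leaf _ => []
  | .node s l r =>
    if s <+: v ∧ s ≠ v then
      (if v.getD s.length false then true :: searchPos v r else false :: searchPos v l)
    else []

/-- Replace the subtree at a position. -/
def replaceAt : PTrie → List Bool → PTrie → PTrie
  | _, [], u => u
  | .leaf s, _ :: _, _ => .leaf s
  | .node s l r, b :: π, u =>
    if b then .node s l (replaceAt r π u) else .node s (replaceAt l π u) r

/-- Longest common prefix of two binary strings. -/
def lcp : List Bool → List Bool → List Bool
  | a :: as, b :: bs => if a = b then a :: lcp as bs else []
  | _, _ => []

/-- Join two tries under a new internal node labelled by the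
longest common prefix of their labels. -/
def join (t₁ t₂ : PTrie) : PTrie :=
  if (lbl t₁).getD (lcp (lbl t₁) (lbl t₂)).length true then
    .node (lcp (lbl t₁) (lbl t₂)) t₂ t₁
  else
    .node (lcp (lbl t₁) (lbl t₂)) t₁ t₂

/-- Sequential insert. -/
def insertT (v : List Bool) : PTrie → PTrie
  | .node s l r =>
    if s <+: v ∧ s ≠ v then
      (if v.getD s.length false then .node s l (insertT v r) else .node s (insertT v l) r)
    else join (.node s l r) (.leaf v)
  | .leaf s => join (.leaf s) (.leaf v)

/-! In `g = node s g₀ g₁` the labels of the sibling `ps` and of the nephew `ns` extend `s ++ [!b]`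
and `s ++ [b]`, so they diverge right after `s`: `join ns ps` is a valid trie labelled `s` whose
leaves are those of `g` except `vd`. As `vi` is as long as `vd`, hence longer than `s`, and does
not extend `s`, joining with `leaf vi` gives a valid trie labelled `lcp s vi`. Replacing a subtree
changes only the child label seen by its parent `s₀`, and `s₀ ++ [i]` is a prefix of both `s`
(validity) and `vi` (hypothesis), hence of `lcp s vi`. -/

open PTrie

theorem Set.diff_insert_union_union_singleton {α : Type*} {A B : Set α} {d v : α}
    (hB : B ⊆ A) (hd : d ∉ B) : A \ insert d B ∪ (B ∪ {v}) = A \ {d} ∪ {v} := by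
  ext w
  by_cases hw : w ∈ B
  · simp [hw, hB hw, ne_of_mem_of_not_mem hw hd]
  · simp [hw]

theorem getD_append_cons (p : List Bool) (x : Bool) (u : List Bool) (d : Bool) :
    (p ++ x :: u).getD p.length d = x := by
  simp

theorem append_not_prefix_of_append_prefix {s w : List Bool} {x : Bool}
    (h : s ++ [x] <+: w) : ¬ s ++ [!x] <+: w := fun h' => by
  simpa using (List.prefix_of_prefix_length_le h h' (by simp)).eq_of_length (by simp)

theorem not_prefix_of_append_prefix {s a c : List Bool} {x : Bool}
    (ha : s ++ [x] <+: a) (hc : s ++ [!x] <+: c) : ¬ a <+: c := fun hac =>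
  append_not_prefix_of_append_prefix (ha.trans hac) hc

theorem lcp_append_cons_not (p : List Bool) (x : Bool) (u v : List Bool) :
    lcp (p ++ x :: u) (p ++ (!x) :: v) = p := by
  induction p with
  | nil => cases x <;> simp [lcp]
  | cons a q ih => simp [lcp, ih]

theorem lcp_eq_of_append_prefix {s a c : List Bool} {x : Bool}
    (ha : s ++ [x] <+: a) (hc : s ++ [!x] <+: c) : lcp a c = s := by
  obtain ⟨u, rfl⟩ := ha
  obtain ⟨v, rfl⟩ := hc
  simpa using lcp_append_cons_not s x u v

theorem prefix_lcp {q a c : List Bool} (ha : q <+: a) (hc : q <+: c) : q <+: lcp a c := by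
  induction q generalizing a c with
  | nil => exact List.nil_prefix
  | cons x q ih =>
    obtain ⟨u, rfl⟩ := ha
    obtain ⟨v, rfl⟩ := hc
    simpa [lcp] using ih (q.prefix_append u) (q.prefix_append v)

theorem exists_eq_lcp_append_of_not_prefix {a c : List Bool} (ha : ¬ a <+: c) (hc : ¬ c <+: a) :
    ∃ x u v, a = lcp a c ++ x :: u ∧ c = lcp a c ++ (!x) :: v := by
  induction a generalizing c with
  | nil => exact absurd List.nil_prefix ha
  | cons x a ih =>
    cases c with
    | nil => exact absurd List.nil_prefix hc
    | cons y c =>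
      by_cases hxy : x = y
      · subst hxy
        obtain ⟨z, u, v, ha', hc'⟩ := ih (by simpa using ha) (by simpa using hc)
        exact ⟨z, u, v, by simp [lcp, ← ha'], by simp [lcp, ← hc']⟩
      · exact ⟨x, a, c, by simp [lcp, hxy], by cases x <;> cases y <;> simp_all [lcp]⟩

theorem replaceAt_nil (t u : PTrie) : replaceAt t [] u = u := by
  cases t <;> rfl

theorem lbl_replaceAt_cons (t : PTrie) (b : Bool) (π : List Bool) (u : PTrie) :
    lbl (replaceAt t (b :: π) u) = lbl t := by
  cases t <;> cases b <;> rfl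

theorem lbl_join (t₁ t₂ : PTrie) : lbl (join t₁ t₂) = lcp (lbl t₁) (lbl t₂) := by
  unfold join; split <;> rfl

theorem leafLabels_join (t₁ t₂ : PTrie) :
    leafLabels (join t₁ t₂) = leafLabels t₁ ∪ leafLabels t₂ := by
  unfold join; split <;> simp [leafLabels, Set.union_comm]

theorem leafLabels_node (s : List Bool) (l r : PTrie) (b : Bool) :
    leafLabels (node s l r) =
      leafLabels (if b then r else l) ∪ leafLabels (if b then l else r) := by
  cases b <;> simp [leafLabels, Set.union_comm]

theorem subtreeAt_append (t : PTrie) (π₁ π₂ : List Bool) :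
    subtreeAt t (π₁ ++ π₂) = (subtreeAt t π₁).bind (subtreeAt · π₂) := by
  induction π₁ generalizing t with
  | nil => rfl
  | cons b π ih => cases t <;> simp [subtreeAt, ih]

theorem leafLabels_subset_of_subtreeAt {t g : PTrie} {π : List Bool}
    (h : subtreeAt t π = some g) : leafLabels g ⊆ leafLabels t := by
  induction π generalizing t with
  | nil => cases h; rfl
  | cons b π ih =>
    cases t with
    | leaf s => cases h
    | node s l r =>
      rw [leafLabels_node s l r b]
      exact (ih h).trans Set.subset_union_left

theorem Valid.child_sibling {s : List Bool} {l r : PTrie} (h : Valid (node s l r)) (b : Bool) :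
    s ++ [b] <+: lbl (if b then r else l) ∧ s ++ [!b] <+: lbl (if b then l else r) ∧
      Valid (if b then r else l) ∧ Valid (if b then l else r) := by
  obtain ⟨hl, hr, hvl, hvr⟩ := h
  cases b
  · exact ⟨hl, hr, hvl, hvr⟩
  · exact ⟨hr, hl, hvr, hvl⟩

theorem Valid.of_subtreeAt {t g : PTrie} {π : List Bool} (ht : Valid t)
    (h : subtreeAt t π = some g) : Valid g := by
  induction π generalizing t with
  | nil => cases h; exact ht
  | cons b π ih =>
    cases t with
    | leaf s => cases h
    | node s l r => exact ih (ht.child_sibling b).2.2.1 h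

theorem Valid.lbl_prefix_of_mem {t : PTrie} (ht : Valid t) {w : List Bool}
    (hw : w ∈ leafLabels t) : lbl t <+: w := by
  induction t with
  | leaf s => cases hw; exact List.prefix_rfl
  | node s l r ihl ihr =>
    obtain ⟨hl, hr, hvl, hvr⟩ := ht
    rcases hw with hw | hw
    · exact ((s.prefix_append _).trans hl).trans (ihl hvl hw)
    · exact ((s.prefix_append _).trans hr).trans (ihr hvr hw)

theorem Valid.disjoint_child_sibling {s : List Bool} {l r : PTrie} (h : Valid (node s l r))
    (b : Bool) :
    Disjoint (leafLabels (if b then r else l)) (leafLabels (if b then l else r)) := by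
  obtain ⟨hc, hs, hvc, hvs⟩ := h.child_sibling b
  exact Set.disjoint_left.2 fun w hwc hws => append_not_prefix_of_append_prefix
    (hc.trans (hvc.lbl_prefix_of_mem hwc)) (hs.trans (hvs.lbl_prefix_of_mem hws))

theorem Valid.leafLabels_eq_insert_of_grandchild_leaf {s s' vd : List Bool}
    {g₀ g₁ d₀ d₁ : PTrie} {b b' : Bool} (hg : Valid (node s g₀ g₁))
    (hgb : (if b then g₁ else g₀) = node s' d₀ d₁) (hdb : (if b' then d₁ else d₀) = leaf vd) :
    leafLabels (node s g₀ g₁) =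
        insert vd (leafLabels (if b' then d₀ else d₁) ∪ leafLabels (if b then g₀ else g₁)) ∧
      vd ∉ leafLabels (if b' then d₀ else d₁) ∪ leafLabels (if b then g₀ else g₁) := by
  have hd := (hgb ▸ (hg.child_sibling b).2.2.1).disjoint_child_sibling b'
  have hg' := hg.disjoint_child_sibling b
  rw [hdb] at hd
  rw [hgb, leafLabels_node s' d₀ d₁ b', hdb] at hg'
  simp only [leafLabels, Set.singleton_union, Set.disjoint_insert_left,
    Set.disjoint_singleton_left] at hd hg'
  refine ⟨?_, fun h => h.elim hd hg'.1⟩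
  rw [leafLabels_node s g₀ g₁ b, hgb, leafLabels_node s' d₀ d₁ b', hdb]
  simp only [leafLabels, Set.singleton_union, Set.insert_union]

theorem Valid.prefix_lbl_of_subtreeAt_append_singleton {t g : PTrie} {π₀ s₀ : List Bool}
    {l₀ r₀ : PTrie} {i : Bool} (ht : Valid t)
    (h₀ : subtreeAt t π₀ = some (node s₀ l₀ r₀)) (h : subtreeAt t (π₀ ++ [i]) = some g) :
    s₀ ++ [i] <+: lbl g := by
  rw [subtreeAt_append, h₀] at h
  cases h
  exact ((ht.of_subtreeAt h₀).child_sibling i).1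

/-- Labels of the ancestors other than the parent are untouched, so only the parent constrains
the new subtree. -/
theorem valid_replaceAt {t u : PTrie} {π : List Bool} (ht : Valid t) (hu : Valid u)
    (hparent : ∀ π₀ i s₀ l₀ r₀, π = π₀ ++ [i] →
      subtreeAt t π₀ = some (node s₀ l₀ r₀) → s₀ ++ [i] <+: lbl u) :
    Valid (replaceAt t π u) := by
  induction π generalizing t with
  | nil => rwa [replaceAt_nil]
  | cons b π ih =>
    cases t with
    | leaf s => trivial
    | node s l r =>
      have hlbl : ∀ c, s ++ [b] <+: lbl c → s ++ [b] <+: lbl (replaceAt c π u) := by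
        intro c hc
        cases π with
        | nil => rw [replaceAt_nil]; exact hparent [] b s l r rfl rfl
        | cons _ _ => rwa [lbl_replaceAt_cons]
      have hrec : Valid (replaceAt (if b then r else l) π u) :=
        ih (ht.child_sibling b).2.2.1 fun π₀ i s₀ l₀ r₀ hπ h₀ =>
          hparent (b :: π₀) i s₀ l₀ r₀ (by simp [hπ]) h₀
      obtain ⟨hl, hr, hvl, hvr⟩ := ht
      cases b
      · exact ⟨hlbl l hl, hr, hrec, hvr⟩
      · exact ⟨hl, hlbl r hr, hvl, hrec⟩

theorem leafLabels_replaceAt_node_cons (s : List Bool) (l r : PTrie) (b : Bool)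
    (π : List Bool) (u : PTrie) :
    leafLabels (replaceAt (node s l r) (b :: π) u) =
      leafLabels (replaceAt (if b then r else l) π u) ∪ leafLabels (if b then l else r) := by
  cases b <;> simp [replaceAt, leafLabels, Set.union_comm]

theorem leafLabels_replaceAt {t g : PTrie} {π : List Bool} (ht : Valid t)
    (h : subtreeAt t π = some g) (u : PTrie) :
    leafLabels (replaceAt t π u) = leafLabels t \ leafLabels g ∪ leafLabels u := by
  induction π generalizing t with
  | nil => cases h; simp [replaceAt_nil]
  | cons b π ih =>
    cases t with
    | leaf s => cases h
    | node s l r =>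
      have hsib : Disjoint (leafLabels (if b then l else r)) (leafLabels g) :=
        (ht.disjoint_child_sibling b).symm.mono_right
          (leafLabels_subset_of_subtreeAt (t := if b then r else l) h)
      rw [leafLabels_replaceAt_node_cons, ih (ht.child_sibling b).2.2.1 h,
        leafLabels_node s l r b, Set.union_sdiff_distrib, hsib.sdiff_eq_left,
        Set.union_right_comm]

theorem valid_replaceAt_of_lbl_eq_lcp {t g u : PTrie} {π v : List Bool} (ht : Valid t)
    (hsub : subtreeAt t π = some g) (hu : Valid u) (hlbl : lbl u = lcp (lbl g) v)
    (hparent : ∀ π₀ i s₀ l₀ r₀, π = π₀ ++ [i] →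
      subtreeAt t π₀ = some (node s₀ l₀ r₀) → s₀ ++ [i] <+: v) :
    Valid (replaceAt t π u) :=
  valid_replaceAt ht hu fun π₀ i s₀ l₀ r₀ hπ h₀ => hlbl ▸
    prefix_lcp (ht.prefix_lbl_of_subtreeAt_append_singleton h₀ (hπ ▸ hsub))
      (hparent π₀ i s₀ l₀ r₀ hπ h₀)

theorem valid_join {t₁ t₂ : PTrie} (h₁ : Valid t₁) (h₂ : Valid t₂)
    (h₁₂ : ¬ lbl t₁ <+: lbl t₂) (h₂₁ : ¬ lbl t₂ <+: lbl t₁) : Valid (join t₁ t₂) := by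
  obtain ⟨x, u, v, e₁, e₂⟩ := exists_eq_lcp_append_of_not_prefix h₁₂ h₂₁
  unfold join
  generalize lcp (lbl t₁) (lbl t₂) = p at e₁ e₂ ⊢
  rw [e₁, getD_append_cons]
  cases x
  · exact ⟨⟨u, by simp [e₁]⟩, ⟨v, by simp [e₂]⟩, h₁, h₂⟩
  · exact ⟨⟨v, by simp [e₂]⟩, ⟨u, by simp [e₁]⟩, h₂, h₁⟩

/-- Special case 4 of the replace operation. -/
theorem replace_special_case4 (t : PTrie) (ℓ : ℕ) (hv : Valid t)
    (hleaf : ∀ w ∈ leafLabels t, w.length = ℓ)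
    (vi : List Bool) (hvi : vi.length = ℓ)
    (π s s' : List Bool) (g₀ g₁ d₀ d₁ : PTrie) (b b' : Bool) (vd : List Bool)
    (hsub : subtreeAt t π = some (PTrie.node s g₀ g₁))
    (hgb : (if b then g₁ else g₀) = PTrie.node s' d₀ d₁)
    (hdb : (if b' then d₁ else d₀) = PTrie.leaf vd)
    (hnp : ¬ (s <+: vi))
    (hparent : ∀ (π₀ : List Bool) (i : Bool) (s₀ : List Bool) (l₀ r₀ : PTrie),
        π = π₀ ++ [i] → subtreeAt t π₀ = some (PTrie.node s₀ l₀ r₀) →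
        (s₀ ++ [i]) <+: vi) :
    ¬ (lbl (if b' then d₀ else d₁) <+: lbl (if b then g₀ else g₁)) ∧
    ¬ (lbl (if b then g₀ else g₁) <+: lbl (if b' then d₀ else d₁)) ∧
    lcp (lbl (if b' then d₀ else d₁)) (lbl (if b then g₀ else g₁)) = s ∧
    Valid (replaceAt t π
      (join (join (if b' then d₀ else d₁) (if b then g₀ else g₁)) (PTrie.leaf vi))) ∧
    leafLabels (replaceAt t π
      (join (join (if b' then d₀ else d₁) (if b then g₀ else g₁)) (PTrie.leaf vi))) =
      (leafLabels t \ {vd}) ∪ {vi} := by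
  set ns := if b' then d₀ else d₁
  set ps := if b then g₀ else g₁
  have hg := hv.of_subtreeAt hsub
  obtain ⟨hss', hsps, hvg', hvps⟩ := hg.child_sibling b
  rw [hgb] at hss' hvg'
  obtain ⟨hs'vd, hs'ns, -, hvns⟩ := hvg'.child_sibling b'
  rw [hdb] at hs'vd
  have hsns : s ++ [b] <+: lbl ns := hss'.trans ((s'.prefix_append _).trans hs'ns)
  have hnsps : ¬ lbl ns <+: lbl ps := not_prefix_of_append_prefix hsns hsps
  have hpsns : ¬ lbl ps <+: lbl ns := not_prefix_of_append_prefix hsps (by simpa using hsns)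
  have hlcp : lcp (lbl ns) (lbl ps) = s := lcp_eq_of_append_prefix hsns hsps
  obtain ⟨hLg, hvd⟩ := hg.leafLabels_eq_insert_of_grandchild_leaf hgb hdb
  have hsvd : s ++ [b] <+: vd := hss'.trans ((s'.prefix_append _).trans hs'vd)
  have hvd_len : vd.length = ℓ :=
    hleaf vd (leafLabels_subset_of_subtreeAt hsub (hLg ▸ Set.mem_insert _ _))
  have hvis : ¬ vi <+: s := fun h => by
    have hsvi := h.length_le
    have hsvd_len := hsvd.length_le
    rw [List.length_append, List.length_singleton, hvd_len] at hsvd_len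
    omega
  have hlblJ : lbl (join ns ps) = s := (lbl_join ns ps).trans hlcp
  refine ⟨hnsps, hpsns, hlcp, ?_, ?_⟩
  · exact valid_replaceAt_of_lbl_eq_lcp hv hsub
      (valid_join (valid_join hvns hvps hnsps hpsns) trivial (hlblJ ▸ hnp) (hlblJ ▸ hvis))
      (by rw [lbl_join, hlblJ]; rfl) hparent
  · rw [leafLabels_replaceAt hv hsub, hLg, leafLabels_join, leafLabels_join]
    exact Set.diff_insert_union_union_singleton
      (fun w hw => leafLabels_subset_of_subtreeAt hsub (hLg ▸ Set.mem_insert_of_mem _ hw)) hvd
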